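/- arXiv:2405.08506 — 7 statements merged into one kernel-verified Lean document; each statement's English description precedes it below -/
import Mathlib

section
/- Let a : {1,...,n-1} → {1,...,n} be a noncrossing arborescence with n ≥ 2 nodes, and let r be minimal with a(r) = n. Then the restriction a₁ : {1,...,r-1} → {1,...,r} given by a₁(i) = a(i), and the map a₂ : {1,...,n-r-1} → {1,...,n-r} given by a₂(i) = a(r+i) - r, are well-defined noncrossing arborescences. Moreover, a is uniquely determined by the pair (a₁, a₂). -/
/-- `a` is an arborescence on `n` nodes: `a : {1,…,n-1} → {1,…,n}` with `a i > i`. -/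
def IsArb (n : ℕ) (a : ℕ → ℕ) : Prop :=
  ∀ i, 1 ≤ i → i < n → i < a i ∧ a i ≤ n

/-- `a` is noncrossing: there are no `p < i < b < j` (with `i` in the domain)
such that `a p = b` and `a i = j`. -/
def Noncross (n : ℕ) (a : ℕ → ℕ) : Prop :=
  ¬ ∃ p i b j, 1 ≤ p ∧ p < i ∧ i < n ∧ i < b ∧ b < j ∧ a p = b ∧ a i = j

/-- decomposition of a noncrossing arborescence at the minimal `r` with
`a r = n`: the restriction to `{1,…,r}` and the relabelled restriction to `{r+1,…,n}` are
noncrossing arborescences, and `a` is uniquely determined by this pair. -/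
theorem noncrossing_decomposition (n : ℕ) (hn : 2 ≤ n) (a : ℕ → ℕ)
    (ha : IsArb n a) (hnc : Noncross n a)
    (r : ℕ) (hr1 : 1 ≤ r) (hrn : r < n) (har : a r = n)
    (hmin : ∀ s, 1 ≤ s → s < r → a s ≠ n) :
    (IsArb r a ∧ Noncross r a) ∧
    (IsArb (n - r) (fun i => a (r + i) - r) ∧ Noncross (n - r) (fun i => a (r + i) - r)) ∧
    (∀ b : ℕ → ℕ, IsArb n b → Noncross n b → b r = n → (∀ s, 1 ≤ s → s < r → b s ≠ n) →
      (∀ i, 1 ≤ i → i < r → a i = b i) →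
      (∀ i, 1 ≤ i → i < n - r → a (r + i) = b (r + i)) →
      ∀ i, 1 ≤ i → i < n → a i = b i) := by
  refine ⟨⟨?_, ?_⟩, ⟨?_, ?_⟩, ?_⟩
  · -- IsArb r a
    intro i hi hir
    have h := ha i hi (lt_trans hir hrn)
    refine ⟨h.1, ?_⟩
    by_contra hle
    push_neg at hle
    have hne : a i ≠ n := hmin i hi hir
    have hlt : a i < n := lt_of_le_of_ne h.2 hne
    exact hnc ⟨i, r, a i, n, hi, hir, hrn, hle, hlt, rfl, har⟩
  · -- Noncross r a
    rintro ⟨p, i, b, j, h1, h2, h3, h4, h5, h6, h7⟩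
    exact hnc ⟨p, i, b, j, h1, h2, lt_trans h3 hrn, h4, h5, h6, h7⟩
  · -- IsArb (n - r) shifted
    intro i hi hilt
    have h := ha (r + i) (by omega) (by omega)
    dsimp only
    constructor <;> omega
  · -- Noncross shifted
    rintro ⟨p, i, b, j, h1, h2, h3, h4, h5, h6, h7⟩
    dsimp only at h6 h7
    have hp := ha (r + p) (by omega) (by omega)
    have hi := ha (r + i) (by omega) (by omega)
    refine hnc ⟨r + p, r + i, r + b, r + j, by omega, by omega, by omega, by omega, by omega,
      by omega, by omega⟩
  · -- uniqueness
    intro b _ _ hbr _ h1 h2 i hi hin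
    rcases lt_trichotomy i r with h | h | h
    · exact h1 i hi h
    · subst h; rw [har, hbr]
    · have : i = r + (i - r) := by omega
      rw [this]
      exact h2 (i - r) (by omega) (by omega)
end

section
/- The number of noncrossing arborescences on n+1 nodes equals the n-th Catalan number C_n, for all n ≥ 0. -/
abbrev Arb (n : ℕ) := {a : Fin n → Fin (n + 1) //
  (∀ i : Fin n, (i : ℕ) < (a i : ℕ)) ∧
  ¬ ∃ p i : Fin n, p < i ∧ (i : ℕ) < (a p : ℕ) ∧ (a p : ℕ) < (a i : ℕ)}

def glue (n : ℕ) (j : Fin (n + 1)) (b : Fin (j : ℕ) → Fin ((j : ℕ) + 1))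
    (c : Fin (n - j) → Fin (n - j + 1)) : Fin (n + 1) → Fin (n + 2) := fun i =>
  if h0 : (i : ℕ) = 0 then ⟨(j : ℕ) + 1, by omega⟩
  else if h1 : (i : ℕ) ≤ j then
    ⟨(b ⟨(i : ℕ) - 1, by omega⟩ : ℕ) + 1,
      by have := (b ⟨(i : ℕ) - 1, by omega⟩).isLt; omega⟩
  else
    ⟨(c ⟨(i : ℕ) - 1 - j, by have := i.isLt; omega⟩ : ℕ) + ((j : ℕ) + 1),
      by have := (c ⟨(i : ℕ) - 1 - j, by have := i.isLt; omega⟩).isLt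
         have := j.isLt; omega⟩

lemma glue_zero (n : ℕ) (j : Fin (n + 1)) (b) (c) (i : Fin (n+1)) (h : (i:ℕ) = 0) :
    (glue n j b c i : ℕ) = (j : ℕ) + 1 := by simp [glue, h]

lemma glue_left (n : ℕ) (j : Fin (n + 1)) (b) (c) (i : Fin (n+1)) (h0 : (i:ℕ) ≠ 0)
    (h1 : (i:ℕ) ≤ j) :
    (glue n j b c i : ℕ) = (b ⟨(i : ℕ) - 1, by omega⟩ : ℕ) + 1 := by
  simp [glue, h0, h1]

lemma glue_right (n : ℕ) (j : Fin (n + 1)) (b) (c) (i : Fin (n+1)) (h1 : (j:ℕ) < i) :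
    (glue n j b c i : ℕ) = (c ⟨(i : ℕ) - 1 - j, by have := i.isLt; omega⟩ : ℕ) + ((j:ℕ) + 1) := by
  have h0 : (i:ℕ) ≠ 0 := by omega
  simp [glue, h0, Nat.not_le.2 h1]

lemma glue_mem (n : ℕ) (j : Fin (n + 1)) (b : Arb (j : ℕ)) (c : Arb (n - j)) :
    (∀ i : Fin (n+1), (i : ℕ) < (glue n j b.1 c.1 i : ℕ)) ∧
    ¬ ∃ p i : Fin (n+1), p < i ∧ (i : ℕ) < (glue n j b.1 c.1 p : ℕ) ∧
      (glue n j b.1 c.1 p : ℕ) < (glue n j b.1 c.1 i : ℕ) := by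
  obtain ⟨b, hb1, hb2⟩ := b
  obtain ⟨c, hc1, hc2⟩ := c
  push_neg at hb2 hc2
  constructor
  · intro i
    rcases Nat.eq_zero_or_pos (i : ℕ) with h0 | h0
    · rw [glue_zero n j b c i h0]; omega
    rcases le_or_gt (i : ℕ) (j : ℕ) with h1 | h1
    · rw [glue_left n j b c i (by omega) h1]
      have := hb1 ⟨(i : ℕ) - 1, by omega⟩
      simp at this; omega
    · rw [glue_right n j b c i h1]
      have := hc1 ⟨(i : ℕ) - 1 - j, by have := i.isLt; omega⟩
      simp at this; omega
  · rintro ⟨p, i, hpi, h2, h3⟩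
    have hpi' : (p : ℕ) < (i : ℕ) := hpi
    rcases Nat.eq_zero_or_pos (p : ℕ) with hp0 | hp0
    · -- p = 0 : glue p = j+1, so i ≤ j, and glue i ≤ j+1, contradiction with h3
      rw [glue_zero n j b c p hp0] at h2 h3
      have hij : (i : ℕ) ≤ (j : ℕ) := by omega
      rw [glue_left n j b c i (by omega) hij] at h3
      have := (b ⟨(i : ℕ) - 1, by omega⟩).isLt
      omega
    rcases le_or_gt (p : ℕ) (j : ℕ) with hpj | hpj
    · rw [glue_left n j b c p (by omega) hpj] at h2 h3
      have hbp := (b ⟨(p : ℕ) - 1, by omega⟩).isLt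
      have hij : (i : ℕ) ≤ (j : ℕ) := by omega
      rw [glue_left n j b c i (by omega) hij] at h3
      have := hb2 ⟨(p : ℕ) - 1, by omega⟩ ⟨(i : ℕ) - 1, by omega⟩
        (by simp [Fin.lt_def]; omega) (by simp; omega)
      simp at this; omega
    · have hij : (j : ℕ) < (i : ℕ) := by omega
      rw [glue_right n j b c p hpj] at h2 h3
      rw [glue_right n j b c i hij] at h3
      have := hc2 ⟨(p : ℕ) - 1 - j, by have := p.isLt; omega⟩
        ⟨(i : ℕ) - 1 - j, by have := i.isLt; omega⟩
        (by simp [Fin.lt_def]; omega) (by simp; omega)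
      simp at this; omega

def assemble (n : ℕ) (x : Σ j : Fin (n + 1), Arb (j : ℕ) × Arb (n - j)) : Arb (n + 1) :=
  ⟨glue n x.1 x.2.1.1 x.2.2.1, glue_mem n x.1 x.2.1 x.2.2⟩

lemma assemble_inj (n : ℕ) : Function.Injective (assemble n) := by
  rintro ⟨j, ⟨b, hb⟩, ⟨c, hc⟩⟩ ⟨j', ⟨b', hb'⟩, ⟨c', hc'⟩⟩ h
  have h' : glue n j b c = glue n j' b' c' := congrArg Subtype.val h
  have hz : (j : ℕ) = (j' : ℕ) := by
    have := congrArg Fin.val (congrFun h' 0)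
    rw [glue_zero n j b c 0 rfl, glue_zero n j' b' c' 0 rfl] at this
    omega
  have hjj : j = j' := Fin.ext hz
  subst hjj
  congr 1
  rw [Prod.ext_iff]
  constructor
  · apply Subtype.ext; funext t
    have ht := t.isLt
    have hj := j.isLt
    have hlt : ((t : ℕ) + 1) < n + 1 := by omega
    have h1 := congrArg Fin.val (congrFun h' ⟨(t : ℕ) + 1, hlt⟩)
    rw [glue_left n j b c _ (by simp) (by simp),
        glue_left n j b' c' _ (by simp) (by simp)] at h1
    simp at h1
    apply Fin.ext
    show (b t : ℕ) = (b' t : ℕ)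
    omega
  · apply Subtype.ext; funext t
    have ht := t.isLt
    have hj := j.isLt
    have hlt : ((j : ℕ) + 1 + (t : ℕ)) < n + 1 := by omega
    have h1 := congrArg Fin.val (congrFun h' ⟨(j : ℕ) + 1 + (t : ℕ), hlt⟩)
    rw [glue_right n j b c _ (by simp; omega),
        glue_right n j b' c' _ (by simp; omega)] at h1
    simp at h1
    apply Fin.ext
    show (c t : ℕ) = (c' t : ℕ)
    omega

lemma glue_left' (n : ℕ) (j : Fin (n + 1)) (b) (c) (i : Fin (n+1)) (t : Fin (j : ℕ))
    (h0 : (i:ℕ) ≠ 0) (h1 : (i:ℕ) ≤ j) (ht : (t : ℕ) = (i : ℕ) - 1) :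
    (glue n j b c i : ℕ) = (b t : ℕ) + 1 := by
  rw [glue_left n j b c i h0 h1]
  exact congrArg (fun x => (b x : ℕ) + 1) (Fin.ext ht.symm)

lemma glue_right' (n : ℕ) (j : Fin (n + 1)) (b) (c) (i : Fin (n+1)) (t : Fin (n - (j : ℕ)))
    (h1 : (j:ℕ) < i) (ht : (t : ℕ) = (i : ℕ) - 1 - j) :
    (glue n j b c i : ℕ) = (c t : ℕ) + ((j : ℕ) + 1) := by
  rw [glue_right n j b c i h1]
  exact congrArg (fun x => (c x : ℕ) + ((j : ℕ) + 1)) (Fin.ext ht.symm)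

lemma assemble_surj (n : ℕ) : Function.Surjective (assemble n) := by
  rintro ⟨a, h1, h2⟩
  have h2' := h2
  push_neg at h2'
  have ha0 : 1 ≤ (a 0 : ℕ) := h1 0
  have ha0' : (a 0 : ℕ) < n + 2 := (a 0).isLt
  set k := (a 0 : ℕ) with hk
  have key : ∀ i : Fin (n + 1), (i : ℕ) < k → (a i : ℕ) ≤ k := by
    intro i hi
    rcases Nat.eq_zero_or_pos (i : ℕ) with h0 | h0
    · rw [show i = 0 from Fin.ext (by simp [h0])]
    · exact h2' 0 i h0 hi
  -- the left function
  have hidx1 : ∀ t : Fin (k - 1), ((t : ℕ) + 1) < n + 1 := by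
    intro t; have := t.isLt; omega
  set b : Fin (k - 1) → Fin ((k - 1) + 1) := fun t =>
    ⟨(a ⟨(t : ℕ) + 1, hidx1 t⟩ : ℕ) - 1, by
      have hle : (a ⟨(t : ℕ) + 1, hidx1 t⟩ : ℕ) ≤ k :=
        key ⟨(t : ℕ) + 1, hidx1 t⟩ (show (t : ℕ) + 1 < k from by have := t.isLt; omega)
      have hgt : (t : ℕ) + 1 < (a ⟨(t : ℕ) + 1, hidx1 t⟩ : ℕ) := h1 ⟨(t : ℕ) + 1, hidx1 t⟩
      omega⟩ with hbdef
  have pb1 : ∀ t : Fin (k - 1), (t : ℕ) < (b t : ℕ) := by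
    intro t
    have hgt : (t : ℕ) + 1 < (a ⟨(t : ℕ) + 1, hidx1 t⟩ : ℕ) := h1 ⟨(t : ℕ) + 1, hidx1 t⟩
    show (t : ℕ) < (a ⟨(t : ℕ) + 1, hidx1 t⟩ : ℕ) - 1
    omega
  have pb2 : ¬ ∃ p i : Fin (k - 1), p < i ∧ (i : ℕ) < (b p : ℕ) ∧ (b p : ℕ) < (b i : ℕ) := by
    rintro ⟨p, i, hpi, hl1, hl2⟩
    have hpi' : (p : ℕ) < (i : ℕ) := hpi
    have ep : (b p : ℕ) = (a ⟨(p : ℕ) + 1, hidx1 p⟩ : ℕ) - 1 := rfl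
    have ei : (b i : ℕ) = (a ⟨(i : ℕ) + 1, hidx1 i⟩ : ℕ) - 1 := rfl
    have hap : (p : ℕ) + 1 < (a ⟨(p : ℕ) + 1, hidx1 p⟩ : ℕ) := h1 ⟨(p : ℕ) + 1, hidx1 p⟩
    have hai : (i : ℕ) + 1 < (a ⟨(i : ℕ) + 1, hidx1 i⟩ : ℕ) := h1 ⟨(i : ℕ) + 1, hidx1 i⟩
    have hmain : (a ⟨(i : ℕ) + 1, hidx1 i⟩ : ℕ) ≤ (a ⟨(p : ℕ) + 1, hidx1 p⟩ : ℕ) :=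
      h2' ⟨(p : ℕ) + 1, hidx1 p⟩ ⟨(i : ℕ) + 1, hidx1 i⟩
        (show (p : ℕ) + 1 < (i : ℕ) + 1 by omega)
        (show (i : ℕ) + 1 < (a ⟨(p : ℕ) + 1, hidx1 p⟩ : ℕ) by omega)
    omega
  -- the right function
  have hidx2 : ∀ t : Fin (n - (k - 1)), k + (t : ℕ) < n + 1 := by
    intro t; have := t.isLt; omega
  set c : Fin (n - (k - 1)) → Fin ((n - (k - 1)) + 1) := fun t =>
    ⟨(a ⟨k + (t : ℕ), hidx2 t⟩ : ℕ) - k, by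
      have := (a ⟨k + (t : ℕ), hidx2 t⟩).isLt
      have := t.isLt
      omega⟩ with hcdef
  have pc1 : ∀ t : Fin (n - (k - 1)), (t : ℕ) < (c t : ℕ) := by
    intro t
    have hgt : k + (t : ℕ) < (a ⟨k + (t : ℕ), hidx2 t⟩ : ℕ) := h1 ⟨k + (t : ℕ), hidx2 t⟩
    show (t : ℕ) < (a ⟨k + (t : ℕ), hidx2 t⟩ : ℕ) - k
    omega
  have pc2 : ¬ ∃ p i : Fin (n - (k - 1)), p < i ∧ (i : ℕ) < (c p : ℕ) ∧ (c p : ℕ) < (c i : ℕ) := by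
    rintro ⟨p, i, hpi, hl1, hl2⟩
    have hpi' : (p : ℕ) < (i : ℕ) := hpi
    have ep : (c p : ℕ) = (a ⟨k + (p : ℕ), hidx2 p⟩ : ℕ) - k := rfl
    have ei : (c i : ℕ) = (a ⟨k + (i : ℕ), hidx2 i⟩ : ℕ) - k := rfl
    have hap : k + (p : ℕ) < (a ⟨k + (p : ℕ), hidx2 p⟩ : ℕ) := h1 ⟨k + (p : ℕ), hidx2 p⟩
    have hai : k + (i : ℕ) < (a ⟨k + (i : ℕ), hidx2 i⟩ : ℕ) := h1 ⟨k + (i : ℕ), hidx2 i⟩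
    have hmain : (a ⟨k + (i : ℕ), hidx2 i⟩ : ℕ) ≤ (a ⟨k + (p : ℕ), hidx2 p⟩ : ℕ) :=
      h2' ⟨k + (p : ℕ), hidx2 p⟩ ⟨k + (i : ℕ), hidx2 i⟩
        (show k + (p : ℕ) < k + (i : ℕ) by omega)
        (show k + (i : ℕ) < (a ⟨k + (p : ℕ), hidx2 p⟩ : ℕ) by omega)
    omega
  have hjlt : k - 1 < n + 1 := by omega
  refine ⟨⟨⟨k - 1, hjlt⟩, ⟨⟨b, pb1, pb2⟩, ⟨c, pc1, pc2⟩⟩⟩, ?_⟩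
  apply Subtype.ext
  show glue n ⟨k - 1, hjlt⟩ b c = a
  funext i
  apply Fin.ext
  have hi := i.isLt
  rcases Nat.eq_zero_or_pos (i : ℕ) with h0 | h0
  · rw [glue_zero n ⟨k - 1, hjlt⟩ b c i h0]
    show (k - 1) + 1 = (a i : ℕ)
    rw [show i = 0 from Fin.ext (by simp [h0])]
    omega
  rcases le_or_gt (i : ℕ) (k - 1) with hij | hij
  · have pf : (i : ℕ) - 1 < k - 1 := by omega
    rw [glue_left' n ⟨k - 1, hjlt⟩ b c i ⟨(i : ℕ) - 1, pf⟩ (by omega) hij rfl]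
    have eb : (b ⟨(i : ℕ) - 1, pf⟩ : ℕ)
        = (a ⟨((i : ℕ) - 1) + 1, hidx1 ⟨(i : ℕ) - 1, pf⟩⟩ : ℕ) - 1 := rfl
    have ea : a ⟨((i : ℕ) - 1) + 1, hidx1 ⟨(i : ℕ) - 1, pf⟩⟩ = a i :=
      congrArg a (Fin.ext (show ((i : ℕ) - 1) + 1 = (i : ℕ) by omega))
    rw [ea] at eb
    have := h1 i
    omega
  · have pf : (i : ℕ) - k < n - (k - 1) := by omega
    rw [glue_right' n ⟨k - 1, hjlt⟩ b c i ⟨(i : ℕ) - k, pf⟩ hij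
      (show (i : ℕ) - k = (i : ℕ) - 1 - (k - 1) by omega)]
    have ec : (c ⟨(i : ℕ) - k, pf⟩ : ℕ)
        = (a ⟨k + ((i : ℕ) - k), hidx2 ⟨(i : ℕ) - k, pf⟩⟩ : ℕ) - k := rfl
    have ea : a ⟨k + ((i : ℕ) - k), hidx2 ⟨(i : ℕ) - k, pf⟩⟩ = a i :=
      congrArg a (Fin.ext (show k + ((i : ℕ) - k) = (i : ℕ) by omega))
    rw [ea] at ec
    have := h1 i
    show (c ⟨(i : ℕ) - k, pf⟩ : ℕ) + ((k - 1) + 1) = (a i : ℕ)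
    omega
lemma arb_card_succ (n : ℕ) :
    Fintype.card (Arb (n + 1)) = ∑ j : Fin (n + 1), Fintype.card (Arb (j : ℕ)) * Fintype.card (Arb (n - j)) := by
  calc Fintype.card (Arb (n + 1))
      = Fintype.card (Σ j : Fin (n + 1), Arb (j : ℕ) × Arb (n - j)) :=
        (Fintype.card_congr (Equiv.ofBijective (assemble n)
          ⟨assemble_inj n, assemble_surj n⟩)).symm
    _ = ∑ j : Fin (n + 1), Fintype.card (Arb (j : ℕ) × Arb (n - j)) := Fintype.card_sigma
    _ = ∑ j : Fin (n + 1), Fintype.card (Arb (j : ℕ)) * Fintype.card (Arb (n - j)) :=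
        Finset.sum_congr rfl fun j _ => Fintype.card_prod _ _

lemma arb_card_zero : Fintype.card (Arb 0) = 1 := by
  rw [Fintype.card_eq_one_iff]
  refine ⟨⟨fun i => i.elim0, fun i => i.elim0, by rintro ⟨p, _⟩; exact p.elim0⟩, ?_⟩
  rintro ⟨f, _⟩
  apply Subtype.ext; funext i; exact i.elim0

lemma arb_card (n : ℕ) : Fintype.card (Arb n) = catalan n := by
  induction n using Nat.strong_induction_on with
  | _ n ih =>
    match n with
    | 0 => simp [arb_card_zero]
    | n + 1 =>
      rw [arb_card_succ, catalan_succ]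
      refine Finset.sum_congr rfl fun j _ => ?_
      have hj := j.isLt
      rw [ih j (by omega), ih (n - j) (by omega)]

/-- the number of noncrossing arborescences on `n+1` nodes is the `n`-th
Catalan number. An arborescence on `n+1` nodes is encoded as `a : Fin n → Fin (n+1)`
(index `i` stands for node `i+1`) with `a i > i` (in node labels: `(i:ℕ) < a i`);
noncrossing means there are no nodes `p < i < b < j` with `a p = b` and `a i = j`. -/
theorem card_noncrossing_arborescences (n : ℕ) :
    Fintype.card {a : Fin n → Fin (n + 1) //
      (∀ i : Fin n, (i : ℕ) < (a i : ℕ)) ∧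
      ¬ ∃ p i : Fin n, p < i ∧ (i : ℕ) < (a p : ℕ) ∧ (a p : ℕ) < (a i : ℕ)} = catalan n := by
  exact arb_card n
end

section
/- Every noncrossing arborescence a on n ≥ 2 nodes has an immediate leaf: an index k < n such that a(k) = k+1 and there is no i with a(i) = k. -/
/-- every noncrossing arborescence on `n ≥ 2` nodes has an immediate leaf:
a node `k < n` with `a k = k+1` that is not in the image of `a`. -/
theorem exists_immediate_leaf (n : ℕ) (hn : 2 ≤ n) (a : ℕ → ℕ)
    (ha : IsArb n a) (hnc : Noncross n a) :
    ∃ k, 1 ≤ k ∧ k < n ∧ a k = k + 1 ∧ ∀ i, 1 ≤ i → i < n → a i ≠ k := by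
  classical
  have hP : ∃ k, 1 ≤ k ∧ k < n ∧ a k = k + 1 := by
    refine ⟨n - 1, by omega, by omega, ?_⟩
    have := ha (n - 1) (by omega) (by omega)
    omega
  set k := Nat.find hP with hkdef
  obtain ⟨hk1, hkn, hak⟩ := Nat.find_spec hP
  refine ⟨k, hk1, hkn, hak, ?_⟩
  intro i hi1 hin hai
  have hik : i < k := by
    have := ha i hi1 hin; omega
  have hkm1 : a (k - 1) = k := by
    rcases (by omega : i = k - 1 ∨ i < k - 1) with h | h
    · rw [← h]; exact hai
    · have h1 := ha (k - 1) (by omega) (by omega)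
      by_contra hne
      exact hnc ⟨i, k - 1, k, a (k - 1), hi1, by omega, by omega, by omega,
        by omega, hai, rfl⟩
  have hmin := Nat.find_min hP (show k - 1 < k by omega)
  exact hmin ⟨by omega, by omega, by omega⟩
end

section
/- Let 0 < c_1 < ... < c_n and w ∈ ℝⁿ be such that for each i < n there is a unique maximizer a(i) of τ(i,j) = (w_j - w_i)/(c_j - c_i) over j > i. Then the arborescence a thus defined is noncrossing: there are no indices p < i < b < j with a(p) = b and a(i) = j. -/
lemma slope_split_lt {cx cy cz wx wy wz : ℝ} (h1 : cx < cy) (h2 : cy < cz)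
    (h : (wy - wx) / (cy - cx) < (wz - wx) / (cz - cx)) :
    (wz - wx) / (cz - cx) < (wz - wy) / (cz - cy) := by
  have d1 : (0:ℝ) < cy - cx := by linarith
  have d2 : (0:ℝ) < cz - cy := by linarith
  have d3 : (0:ℝ) < cz - cx := by linarith
  rw [div_lt_div_iff₀ d1 d3] at h
  rw [div_lt_div_iff₀ d3 d2]
  nlinarith

lemma slope_split_gt {cx cy cz wx wy wz : ℝ} (h1 : cx < cy) (h2 : cy < cz)
    (h : (wz - wx) / (cz - cx) < (wy - wx) / (cy - cx)) :
    (wz - wy) / (cz - cy) < (wy - wx) / (cy - cx) := by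
  have d1 : (0:ℝ) < cy - cx := by linarith
  have d2 : (0:ℝ) < cz - cy := by linarith
  have d3 : (0:ℝ) < cz - cx := by linarith
  rw [div_lt_div_iff₀ d3 d1] at h
  rw [div_lt_div_iff₀ d2 d1]
  nlinarith

/-- a max-slope arborescence is noncrossing. Here `0 < c 1 < ⋯ < c n`, and for
each `i < n`, `a i` is the unique maximizer over `j > i` of the slope
`(w j - w i)/(c j - c i)`. -/
theorem maxslope_arborescence_noncrossing (n : ℕ) (c w : ℕ → ℝ)
    (hc0 : 0 < c 1) (hc : ∀ i j, 1 ≤ i → i < j → j ≤ n → c i < c j)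
    (a : ℕ → ℕ) (ha : IsArb n a)
    (hmax : ∀ i, 1 ≤ i → i < n → ∀ k, i < k → k ≤ n → k ≠ a i →
      (w k - w i) / (c k - c i) < (w (a i) - w i) / (c (a i) - c i)) :
    Noncross n a := by
  rintro ⟨p, i, b, j, hp, hpi, hin, hib, hbj, hab, haj⟩
  have hi1 : 1 ≤ i := hp.trans hpi.le
  have hpn : p < n := hpi.trans hin
  have hjn : j ≤ n := haj ▸ (ha i hi1 hin).2
  have hbn : b ≤ n := (hbj.trans_le hjn).le
  have hb1 : 1 ≤ b := hi1.trans hib.le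
  -- c ordering
  have cpi : c p < c i := hc p i hp hpi hin.le
  have cib : c i < c b := hc i b hi1 hib hbn
  have cbj : c b < c j := hc b j hb1 hbj hjn
  -- slope inequalities from maximality
  have h1 : (w i - w p) / (c i - c p) < (w b - w p) / (c b - c p) := by
    have := hmax p hp hpn i hpi hin.le (by omega)
    rwa [hab] at this
  have h2 : (w j - w p) / (c j - c p) < (w b - w p) / (c b - c p) := by
    have := hmax p hp hpn j (hpi.trans (hib.trans hbj)) hjn (by omega)
    rwa [hab] at this
  have h3 : (w b - w i) / (c b - c i) < (w j - w i) / (c j - c i) := by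
    have := hmax i hi1 hin b hib hbn (by omega)
    rwa [haj] at this
  -- derive the contradiction chain
  have k1 : (w b - w p) / (c b - c p) < (w b - w i) / (c b - c i) :=
    slope_split_lt cpi cib h1
  have k2 : (w j - w i) / (c j - c i) < (w j - w b) / (c j - c b) :=
    slope_split_lt cib cbj h3
  have k3 : (w j - w b) / (c j - c b) < (w b - w p) / (c b - c p) :=
    slope_split_gt (cpi.trans cib) cbj h2
  linarith
end

section
/- Let 0 < c_1 < ... < c_n. For every noncrossing arborescence a : {1,...,n-1} → {1,...,n}, there exists w ∈ ℝⁿ such that for all 1 ≤ i < n and all k > i with k ≠ a(i), the slope (w_{a(i)} - w_i)/(c_{a(i)} - c_i) is strictly greater than (w_k - w_i)/(c_k - c_i). -/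
/-- Slope assigned to the edge from `i` to `a i`. -/
noncomputable def mslS (n : ℕ) (a : ℕ → ℕ) (i : ℕ) : ℝ :=
  (i : ℝ) / (2 * (n : ℝ) + 1) - ((a i : ℕ) : ℝ)

/-- Fuel-based recursion computing weights from the root down. -/
noncomputable def mslGo (n : ℕ) (c : ℕ → ℝ) (a : ℕ → ℕ) : ℕ → ℕ → ℝ
  | 0, _ => 0
  | fuel+1, i =>
      if 1 ≤ i ∧ i < n then
        mslGo n c a fuel (a i) - mslS n a i * (c (a i) - c i)
      else 0

lemma mslGo_succ (n : ℕ) (c : ℕ → ℝ) (a : ℕ → ℕ) (ha : IsArb n a) :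
    ∀ fuel i, n ≤ i + fuel → mslGo n c a (fuel+1) i = mslGo n c a fuel i := by
  intro fuel
  induction fuel with
  | zero =>
    intro i h
    have hni : ¬ (1 ≤ i ∧ i < n) := by omega
    simp [mslGo, hni]
  | succ f ih =>
    intro i h
    by_cases hI : 1 ≤ i ∧ i < n
    · have hai := ha i hI.1 hI.2
      conv_lhs => rw [mslGo]
      conv_rhs => rw [mslGo]
      rw [if_pos hI, if_pos hI, ih (a i) (by omega)]
    · conv_lhs => rw [mslGo]
      conv_rhs => rw [mslGo]
      rw [if_neg hI, if_neg hI]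

lemma mslGo_rec (n : ℕ) (c : ℕ → ℝ) (a : ℕ → ℕ) (ha : IsArb n a) :
    ∀ fuel i, 1 ≤ i → i < n → n ≤ i + fuel →
      mslGo n c a fuel i = mslGo n c a fuel (a i) - mslS n a i * (c (a i) - c i) := by
  intro fuel i h1 h2 h3
  match fuel with
  | 0 => omega
  | f+1 =>
    have hai := ha i h1 h2
    rw [mslGo_succ n c a ha f (a i) (by omega)]
    simp only [mslGo, if_pos (⟨h1, h2⟩ : 1 ≤ i ∧ i < n)]

lemma mslS_lt_of_lt (n : ℕ) (a : ℕ → ℕ) (i m : ℕ) (hi : i ≤ n)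
    (hm : a m < a i) : mslS n a i < mslS n a m := by
  unfold mslS
  have hD : (0:ℝ) < 2 * (n:ℝ) + 1 := by positivity
  have h1 : (i:ℝ) / (2 * (n:ℝ) + 1) < 1 := by
    rw [div_lt_one hD]
    have : (i:ℝ) ≤ (n:ℝ) := by exact_mod_cast hi
    linarith
  have h2 : (0:ℝ) ≤ (m:ℝ) / (2 * (n:ℝ) + 1) := by positivity
  have h3 : ((a m : ℕ) : ℝ) + 1 ≤ ((a i : ℕ) : ℝ) := by exact_mod_cast hm
  linarith

lemma mslS_lt_of_eq (n : ℕ) (a : ℕ → ℕ) (i m : ℕ)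
    (he : a m = a i) (him : i < m) : mslS n a i < mslS n a m := by
  unfold mslS
  rw [he]
  have hD : (0:ℝ) < 2 * (n:ℝ) + 1 := by positivity
  have h1 : (i:ℝ) / (2 * (n:ℝ) + 1) < (m:ℝ) / (2 * (n:ℝ) + 1) := by
    rw [div_lt_div_iff₀ hD hD]
    have : (i:ℝ) < (m:ℝ) := by exact_mod_cast him
    nlinarith
  linarith

/-- every noncrossing arborescence is realized as the max-slope arborescence
for some weight vector `w`, given `0 < c 1 < ⋯ < c n`. -/
theorem noncrossing_is_maxslope (n : ℕ) (c : ℕ → ℝ)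
    (hc0 : 0 < c 1) (hc : ∀ i j, 1 ≤ i → i < j → j ≤ n → c i < c j)
    (a : ℕ → ℕ) (ha : IsArb n a) (hnc : Noncross n a) :
    ∃ w : ℕ → ℝ, ∀ i, 1 ≤ i → i < n → ∀ k, i < k → k ≤ n → k ≠ a i →
      (w k - w i) / (c k - c i) < (w (a i) - w i) / (c (a i) - c i) := by
  refine ⟨mslGo n c a n, ?_⟩
  have key : ∀ μ, ∀ i k, (n - i) * n + (a i - k) ≤ μ → 1 ≤ i → i < k → k ≤ n →
      (mslGo n c a n k - mslGo n c a n i ≤ mslS n a i * (c k - c i)) ∧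
      (k ≠ a i → mslGo n c a n k - mslGo n c a n i < mslS n a i * (c k - c i)) := by
    intro μ
    induction μ with
    | zero =>
      intro i k hμ h1 hik hkn
      exfalso
      have hpos : 0 < (n - i) * n := Nat.mul_pos (by omega) (by omega)
      have : (0:ℕ) < (n - i) * n + (a i - k) := lt_of_lt_of_le hpos (Nat.le_add_right _ _)
      exact absurd (lt_of_lt_of_le this hμ) (lt_irrefl 0)
    | succ m ih =>
      intro i k hμ h1 hik hkn
      have hInlt : i < n := by omega
      have hai := ha i h1 hInlt
      have hwreci : mslGo n c a n i
          = mslGo n c a n (a i) - mslS n a i * (c (a i) - c i) :=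
        mslGo_rec n c a ha n i h1 hInlt (by omega)
      rcases lt_trichotomy k (a i) with hlt | heq | hgt
      · -- k < a i
        have hkn' : k < n := by omega
        have hak := ha k (by omega) hkn'
        have hakle : a k ≤ a i := by
          by_contra hcon
          exact hnc ⟨i, k, a i, a k, h1, hik, hkn', hlt, by omega, rfl, rfl⟩
        have hwreck : mslGo n c a n k
            = mslGo n c a n (a k) - mslS n a k * (c (a k) - c k) :=
          mslGo_rec n c a ha n k (by omega) hkn' (by omega)
        have hcakk : c k < c (a k) := hc k (a k) (by omega) hak.1 hak.2
        rcases eq_or_lt_of_le hakle with heq2 | hlt2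
        · -- a k = a i
          have hs : mslS n a i < mslS n a k := mslS_lt_of_eq n a i k heq2 hik
          rw [heq2] at hwreck hcakk
          have hmul : mslS n a i * (c (a i) - c k) < mslS n a k * (c (a i) - c k) :=
            mul_lt_mul_of_pos_right hs (by linarith)
          have hrid : mslS n a i * (c (a i) - c i) - mslS n a i * (c (a i) - c k)
              = mslS n a i * (c k - c i) := by ring
          have hstrict : mslGo n c a n k - mslGo n c a n i < mslS n a i * (c k - c i) := by
            rw [hwreck, hwreci]
            linarith
          exact ⟨le_of_lt hstrict, fun _ => hstrict⟩
        · -- a k < a i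
          have hmeasnew : (n - i) * n + (a i - a k) < (n - i) * n + (a i - k) :=
            Nat.add_lt_add_left (by omega) _
          have hrec := ih i (a k) (Nat.lt_succ_iff.mp (lt_of_lt_of_le hmeasnew hμ))
            h1 (by omega) hak.2
          have hstrict0 : mslGo n c a n (a k) - mslGo n c a n i
              < mslS n a i * (c (a k) - c i) := hrec.2 (by omega)
          have hs : mslS n a i < mslS n a k := mslS_lt_of_lt n a i k (by omega) hlt2
          have hmul : mslS n a i * (c (a k) - c k) < mslS n a k * (c (a k) - c k) :=
            mul_lt_mul_of_pos_right hs (by linarith)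
          have hrid : mslS n a i * (c (a k) - c i) - mslS n a i * (c (a k) - c k)
              = mslS n a i * (c k - c i) := by ring
          have hstrict : mslGo n c a n k - mslGo n c a n i < mslS n a i * (c k - c i) := by
            rw [hwreck]
            linarith
          exact ⟨le_of_lt hstrict, fun _ => hstrict⟩
      · -- k = a i
        have heqw : mslGo n c a n k - mslGo n c a n i = mslS n a i * (c k - c i) := by
          rw [heq, hwreci]; ring
        exact ⟨le_of_eq heqw, fun hne => absurd heq hne⟩
      · -- a i < k
        have hain : a i < n := by omega
        have haai := ha (a i) (by omega) hain
        have e6 : (n - a i) * n + (a (a i) - k) ≤ m := by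
          have e2 : (n - a i) * n ≤ (n - i - 1) * n := Nat.mul_le_mul_right n (by omega)
          have e3 : (n - i - 1) * n + n = (n - i) * n := by
            have h7 : n - i - 1 + 1 = n - i := by omega
            calc (n - i - 1) * n + n = (n - i - 1 + 1) * n := by ring
              _ = (n - i) * n := by rw [h7]
          have h0 : a i - k = 0 := by omega
          rw [h0] at hμ
          have e4 : a (a i) - k + 1 ≤ n := by omega
          generalize hq1 : (n - a i) * n = q1 at e2
          generalize hq2 : (n - i - 1) * n = q2 at e2 e3
          generalize hq3 : (n - i) * n = q3 at e3 hμ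
          omega
        have hrec := ih (a i) k e6 (by omega) hgt hkn
        have wle : mslGo n c a n k - mslGo n c a n (a i)
            ≤ mslS n a (a i) * (c k - c (a i)) := hrec.1
        have hs : mslS n a (a i) < mslS n a i := mslS_lt_of_lt n a (a i) i hai.2 haai.1
        have hck : c (a i) < c k := hc (a i) k (by omega) hgt hkn
        have hmul : mslS n a (a i) * (c k - c (a i)) < mslS n a i * (c k - c (a i)) :=
          mul_lt_mul_of_pos_right hs (by linarith)
        have hrid : mslS n a i * (c k - c (a i)) + mslS n a i * (c (a i) - c i)
            = mslS n a i * (c k - c i) := by ring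
        have hstrict : mslGo n c a n k - mslGo n c a n i < mslS n a i * (c k - c i) := by
          rw [hwreci]
          linarith
        exact ⟨le_of_lt hstrict, fun _ => hstrict⟩
  intro i h1 h2 k hik hkn hka
  have hai := ha i h1 h2
  have hcai : c i < c (a i) := hc i (a i) h1 hai.1 hai.2
  have hcik : c i < c k := hc i k h1 hik hkn
  have hwreci : mslGo n c a n i
      = mslGo n c a n (a i) - mslS n a i * (c (a i) - c i) :=
    mslGo_rec n c a ha n i h1 h2 (by omega)
  have hR : (mslGo n c a n (a i) - mslGo n c a n i) / (c (a i) - c i) = mslS n a i := by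
    rw [hwreci]
    have : mslGo n c a n (a i) - (mslGo n c a n (a i) - mslS n a i * (c (a i) - c i))
        = mslS n a i * (c (a i) - c i) := by ring
    rw [this, mul_div_assoc, div_self (by linarith), mul_one]
  rw [hR]
  rw [div_lt_iff₀ (by linarith)]
  exact (key ((n - i) * n + (a i - k)) i k le_rfl h1 hik hkn).2 hka
end

section
/- Let 0 < c_1 < ... < c_n, w ∈ ℝⁿ generic, and let a be the max-slope arborescence (a(i) is the unique maximizer over j > i of τ(i,j) = (w_j - w_i)/(c_j - c_i)). Define τ(i) = max_{j>i} τ(i,j). If i < n satisfies τ(i) ≥ τ(k) for all k < n, then a(i) = i+1 and there is no h < i with a(h) = i (i.e., i is an immediate leaf of a). -/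
lemma slope_trans1 (x y z wx wy wz : ℝ) (hxy : x < y) (hyz : y < z)
    (h : (wy - wx)/(y - x) < (wz - wx)/(z - x)) :
    (wz - wx)/(z - x) < (wz - wy)/(z - y) := by
  rw [div_lt_div_iff₀ (by linarith) (by linarith)] at h ⊢
  nlinarith

lemma slope_trans2 (x y z wx wy wz : ℝ) (hxy : x < y) (hyz : y < z)
    (h : (wz - wx)/(z - x) < (wy - wx)/(y - x)) :
    (wz - wy)/(z - y) < (wy - wx)/(y - x) := by
  rw [div_lt_div_iff₀ (by linarith) (by linarith)] at h ⊢
  nlinarith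


/-- if `a` is the max-slope arborescence for `0 < c 1 < ⋯ < c n` and weights
`w`, and the maximal slope `τ(i) = (w (a i) - w i)/(c (a i) - c i)` at `i` is largest among
all `k < n`, then `i` is an immediate leaf: `a i = i + 1` and no `h < i` has `a h = i`. -/
theorem maximal_slope_immediate_leaf (n : ℕ) (c w : ℕ → ℝ)
    (hc0 : 0 < c 1) (hc : ∀ i j, 1 ≤ i → i < j → j ≤ n → c i < c j)
    (a : ℕ → ℕ) (ha : IsArb n a)
    (hmax : ∀ i, 1 ≤ i → i < n → ∀ k, i < k → k ≤ n → k ≠ a i →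
      (w k - w i) / (c k - c i) < (w (a i) - w i) / (c (a i) - c i))
    (i : ℕ) (hi1 : 1 ≤ i) (hin : i < n)
    (htop : ∀ k, 1 ≤ k → k < n →
      (w (a k) - w k) / (c (a k) - c k) ≤ (w (a i) - w i) / (c (a i) - c i)) :
    a i = i + 1 ∧ ∀ h, 1 ≤ h → h < i → a h ≠ i := by
  obtain ⟨hia, han⟩ := ha i hi1 hin
  constructor
  · by_contra hne
    have h2 : i + 1 < a i := lt_of_le_of_ne hia (fun e => hne e.symm)
    have h1n : i + 1 < n := lt_of_lt_of_le h2 han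
    have hci : c i < c (i+1) := hc i (i+1) hi1 (by omega) (by omega)
    have hcj : c (i+1) < c (a i) := hc (i+1) (a i) (by omega) h2 han
    have hA := hmax i hi1 hin (i+1) (by omega) (by omega) (by omega)
    have hB := slope_trans1 (c i) (c (i+1)) (c (a i)) (w i) (w (i+1)) (w (a i)) hci hcj hA
    -- τ(i+1, a i) ≤ τ(i+1)
    have hC : (w (a i) - w (i+1)) / (c (a i) - c (i+1)) ≤
        (w (a (i+1)) - w (i+1)) / (c (a (i+1)) - c (i+1)) := by
      rcases eq_or_ne (a i) (a (i+1)) with he | he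
      · rw [he]
      · exact le_of_lt (hmax (i+1) (by omega) h1n (a i) h2 han he)
    have hD := htop (i+1) (by omega) h1n
    linarith
  · intro h h1 hhi hah
    have hch : c h < c i := hc h i h1 hhi (by omega)
    have hci : c i < c (a i) := hc i (a i) hi1 hia han
    have hA := hmax h h1 (by omega) (a i) (by omega) han (by omega)
    rw [hah] at hA
    have hB := slope_trans2 (c h) (c i) (c (a i)) (w h) (w i) (w (a i)) hch hci hA
    have hC := htop h h1 (by omega)
    rw [hah] at hC
    linarith
end

section
/- Every reducible arborescence on the grid [m]×[n] is consistent and grid-noncrossing. -/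
/-- A grid arborescence on `[m] × [n]`: every non-sink node `(r,i)` is mapped to `(s,i)`
with `s > r` or to `(r,j)` with `j > i`. -/
def IsGridArb (m n : ℕ) (a : ℕ × ℕ → ℕ × ℕ) : Prop :=
  ∀ r i, 1 ≤ r → r ≤ m → 1 ≤ i → i ≤ n → (r, i) ≠ (m, n) →
    ((a (r, i)).2 = i ∧ r < (a (r, i)).1 ∧ (a (r, i)).1 ≤ m) ∨
    ((a (r, i)).1 = r ∧ i < (a (r, i)).2 ∧ (a (r, i)).2 ≤ n)

/-- Reducibility of a grid arborescence with row set `R` and column set `C`: either both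
are singletons, or there is a full row (resp. column) of immediate leaves (nodes with no
incoming arc, mapped to the next remaining row (resp. column)) whose removal leaves a
reducible arborescence. -/
inductive Reducible : Finset ℕ → Finset ℕ → (ℕ × ℕ → ℕ × ℕ) → Prop where
  | base (r i : ℕ) (a : ℕ × ℕ → ℕ × ℕ) : Reducible {r} {i} a
  | row (R C : Finset ℕ) (a : ℕ × ℕ → ℕ × ℕ) (r r' : ℕ)
      (hr : r ∈ R) (hr' : r' ∈ R) (hlt : r < r')
      (hsucc : ∀ s ∈ R, r < s → r' ≤ s)
      (hmap : ∀ i ∈ C, a (r, i) = (r', i))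
      (hnoinH : ∀ i ∈ C, ∀ s ∈ R, s < r → a (s, i) ≠ (r, i))
      (hnoinV : ∀ i ∈ C, ∀ j ∈ C, j < i → a (r, j) ≠ (r, i))
      (hrec : Reducible (R.erase r) C a) : Reducible R C a
  | col (R C : Finset ℕ) (a : ℕ × ℕ → ℕ × ℕ) (i i' : ℕ)
      (hi : i ∈ C) (hi' : i' ∈ C) (hlt : i < i')
      (hsucc : ∀ j ∈ C, i < j → i' ≤ j)
      (hmap : ∀ r ∈ R, a (r, i) = (r, i'))
      (hnoinV : ∀ r ∈ R, ∀ j ∈ C, j < i → a (r, j) ≠ (r, i))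
      (hnoinH : ∀ r ∈ R, ∀ s ∈ R, s < r → a (s, i) ≠ (r, i))
      (hrec : Reducible R (C.erase i) a) : Reducible R C a

/-- Consistency: every horizontal arc copies the top-most horizontal arc in its column,
every vertical arc copies the right-most vertical arc in its row; the induced
arborescences are `a' r = (a (r, n)).1` and `a'' i = (a (m, i)).2`. -/
def Consistent (m n : ℕ) (a : ℕ × ℕ → ℕ × ℕ) : Prop :=
  ∀ r i, 1 ≤ r → r ≤ m → 1 ≤ i → i ≤ n → (r, i) ≠ (m, n) →
    (∀ s, a (r, i) = (s, i) → (a (r, n)).1 = s) ∧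
    (∀ j, a (r, i) = (r, j) → (a (m, i)).2 = j)

/-- Grid-noncrossing: the induced arborescences are noncrossing and no vertical arc
crosses a horizontal arc. -/
def GridNoncross (m n : ℕ) (a : ℕ × ℕ → ℕ × ℕ) : Prop :=
  Noncross m (fun r => (a (r, n)).1) ∧ Noncross n (fun i => (a (m, i)).2) ∧
  ¬ ∃ r s t i j k, 1 ≤ r ∧ r ≤ s ∧ s < t ∧ t ≤ m ∧ 1 ≤ i ∧ i ≤ j ∧ j < k ∧ k ≤ n ∧
      (r, i) ≠ (s, j) ∧ a (s, i) = (s, k) ∧ a (r, j) = (t, j)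

def GridInv (m n : ℕ) (a : ℕ × ℕ → ℕ × ℕ) (R C : Finset ℕ) : Prop :=
  (∀ r ∈ R, r ≠ m → (a (r, n)).1 ∈ R ∧ r < (a (r, n)).1) ∧
  (∀ i ∈ C, i ≠ n → (a (m, i)).2 ∈ C ∧ i < (a (m, i)).2) ∧
  (∀ r ∈ R, ∀ i ∈ C, (r, i) ≠ (m, n) →
      a (r, i) = ((a (r, n)).1, i) ∨ a (r, i) = (r, (a (m, i)).2)) ∧
  (∀ p ∈ R, p ≠ m → ∀ q ∈ R, p < q → q < (a (p, n)).1 → (a (q, n)).1 ≤ (a (p, n)).1) ∧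
  (∀ p ∈ C, p ≠ n → ∀ q ∈ C, p < q → q < (a (m, p)).2 → (a (m, q)).2 ≤ (a (m, p)).2) ∧
  (∀ r ∈ R, r ≠ m → ∀ s ∈ R, ∀ i ∈ C, i ≠ n → ∀ j ∈ C,
      r ≤ s → s < (a (r, n)).1 → i ≤ j → j < (a (m, i)).2 → (r, i) ≠ (s, j) →
      a (s, i) = (s, (a (m, i)).2) → a (r, j) = ((a (r, n)).1, j) → False)

lemma gridKey (m n : ℕ) (R C : Finset ℕ) (a : ℕ × ℕ → ℕ × ℕ)
    (hred : Reducible R C a) :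
    m ∈ R → n ∈ C → (∀ r ∈ R, r ≤ m) → (∀ i ∈ C, i ≤ n) → GridInv m n a R C := by
  induction hred with
  | base r i a =>
    intro hm hn _ _
    obtain rfl : r = m := (Finset.mem_singleton.mp hm).symm
    obtain rfl : i = n := (Finset.mem_singleton.mp hn).symm
    refine ⟨?_, ?_, ?_, ?_, ?_, ?_⟩
    · intro r hr hrm; exact absurd (Finset.mem_singleton.mp hr) hrm
    · intro i hi hin; exact absurd (Finset.mem_singleton.mp hi) hin
    · intro r' hr i' hi hne
      exact absurd (by rw [Finset.mem_singleton.mp hr, Finset.mem_singleton.mp hi]) hne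
    · intro p hp hpm; exact absurd (Finset.mem_singleton.mp hp) hpm
    · intro p hp hpn; exact absurd (Finset.mem_singleton.mp hp) hpn
    · intro r' hr hrm; exact absurd (Finset.mem_singleton.mp hr) hrm
  | row R C a r0 r0' hr hr' hlt hsucc hmap hnoinH hnoinV hrec ih =>
    intro hmR hnC hbR hbC
    have hr0m : r0 ≠ m := fun h => absurd (hbR r0' hr') (by omega)
    have hmR' : m ∈ R.erase r0 := Finset.mem_erase.mpr ⟨fun h => hr0m h.symm, hmR⟩
    have hbR' : ∀ r ∈ R.erase r0, r ≤ m := fun r hrr => hbR r (Finset.mem_of_mem_erase hrr)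
    obtain ⟨D1, D2, P1, N1, N2, M⟩ := ih hmR' hnC hbR' hbC
    have hr0n : a (r0, n) = (r0', n) := hmap n hnC
    have hf0 : (a (r0, n)).1 = r0' := by rw [hr0n]
    refine ⟨?_, ?_, ?_, ?_, ?_, ?_⟩
    · intro r hrR hrm
      by_cases h : r = r0
      · subst h; rw [hf0]; exact ⟨hr', hlt⟩
      · obtain ⟨h1, h2⟩ := D1 r (Finset.mem_erase.mpr ⟨h, hrR⟩) hrm
        exact ⟨Finset.mem_of_mem_erase h1, h2⟩
    · exact D2
    · intro r hrR i hiC hne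
      by_cases h : r = r0
      · subst h; left; rw [hmap i hiC, hf0]
      · exact P1 r (Finset.mem_erase.mpr ⟨h, hrR⟩) i hiC hne
    · intro p hpR hpm q hqR hpq hqf
      by_cases hp : p = r0
      · subst hp; rw [hf0] at hqf; exact absurd (hsucc q hqR hpq) (by omega)
      · have hpR' : p ∈ R.erase r0 := Finset.mem_erase.mpr ⟨hp, hpR⟩
        by_cases hq : q = r0
        · subst hq
          obtain ⟨h1, _⟩ := D1 p hpR' hpm
          rw [hf0]
          exact hsucc _ (Finset.mem_of_mem_erase h1) hqf
        · exact N1 p hpR' hpm q (Finset.mem_erase.mpr ⟨hq, hqR⟩) hpq hqf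
    · exact N2
    · intro r hrR hrm s hsR i hiC hin j hjC hrs hsf hij hjg hne hH hV
      by_cases hs : s = r0
      · subst hs
        rw [hmap i hiC] at hH
        exact absurd (congrArg Prod.fst hH) (by simp; omega)
      · by_cases hrr : r = r0
        · subst hrr
          rw [hf0] at hsf
          have : r < s := lt_of_le_of_ne hrs (fun h => hs h.symm)
          exact absurd (hsucc s hsR this) (by omega)
        · exact M r (Finset.mem_erase.mpr ⟨hrr, hrR⟩) hrm s (Finset.mem_erase.mpr ⟨hs, hsR⟩)
            i hiC hin j hjC hrs hsf hij hjg hne hH hV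
  | col R C a i0 i0' hi hi' hlt hsucc hmap hnoinV hnoinH hrec ih =>
    intro hmR hnC hbR hbC
    have hi0n : i0 ≠ n := fun h => absurd (hbC i0' hi') (by omega)
    have hnC' : n ∈ C.erase i0 := Finset.mem_erase.mpr ⟨fun h => hi0n h.symm, hnC⟩
    have hbC' : ∀ i ∈ C.erase i0, i ≤ n := fun i hii => hbC i (Finset.mem_of_mem_erase hii)
    obtain ⟨D1, D2, P1, N1, N2, M⟩ := ih hmR hnC' hbR hbC'
    have hi0m : a (m, i0) = (m, i0') := hmap m hmR
    have hg0 : (a (m, i0)).2 = i0' := by rw [hi0m]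
    refine ⟨?_, ?_, ?_, ?_, ?_, ?_⟩
    · exact D1
    · intro i hiC hin
      by_cases h : i = i0
      · subst h; rw [hg0]; exact ⟨hi', hlt⟩
      · obtain ⟨h1, h2⟩ := D2 i (Finset.mem_erase.mpr ⟨h, hiC⟩) hin
        exact ⟨Finset.mem_of_mem_erase h1, h2⟩
    · intro r hrR i hiC hne
      by_cases h : i = i0
      · subst h; right; rw [hmap r hrR, hg0]
      · exact P1 r hrR i (Finset.mem_erase.mpr ⟨h, hiC⟩) hne
    · exact N1
    · intro p hpC hpn q hqC hpq hqg
      by_cases hp : p = i0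
      · subst hp; rw [hg0] at hqg; exact absurd (hsucc q hqC hpq) (by omega)
      · have hpC' : p ∈ C.erase i0 := Finset.mem_erase.mpr ⟨hp, hpC⟩
        by_cases hq : q = i0
        · subst hq
          obtain ⟨h1, _⟩ := D2 p hpC' hpn
          rw [hg0]
          exact hsucc _ (Finset.mem_of_mem_erase h1) hqg
        · exact N2 p hpC' hpn q (Finset.mem_erase.mpr ⟨hq, hqC⟩) hpq hqg
    · intro r hrR hrm s hsR i hiC hin j hjC hrs hsf hij hjg hne hH hV
      by_cases hj : j = i0
      · subst hj
        rw [hmap r hrR] at hV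
        exact absurd (congrArg Prod.snd hV) (by simp; omega)
      · by_cases hii : i = i0
        · subst hii
          rw [hg0] at hjg
          have : i < j := lt_of_le_of_ne hij (fun h => hj h.symm)
          exact absurd (hsucc j hjC this) (by omega)
        · exact M r hrR hrm s hsR i (Finset.mem_erase.mpr ⟨hii, hiC⟩) hin
            j (Finset.mem_erase.mpr ⟨hj, hjC⟩) hrs hsf hij hjg hne hH hV

/-- every reducible grid arborescence is consistent and grid-noncrossing. -/
theorem reducible_consistent_gridNoncross (m n : ℕ) (hm : 1 ≤ m) (hn : 1 ≤ n)
    (a : ℕ × ℕ → ℕ × ℕ) (ha : IsGridArb m n a)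
    (hred : Reducible (Finset.Icc 1 m) (Finset.Icc 1 n) a) :
    Consistent m n a ∧ GridNoncross m n a := by
  have hinv : GridInv m n a (Finset.Icc 1 m) (Finset.Icc 1 n) := by
    apply gridKey m n _ _ a hred
    · exact Finset.mem_Icc.mpr ⟨hm, le_refl m⟩
    · exact Finset.mem_Icc.mpr ⟨hn, le_refl n⟩
    · intro r hr; exact (Finset.mem_Icc.mp hr).2
    · intro i hi; exact (Finset.mem_Icc.mp hi).2

  obtain ⟨D1, D2, P1, N1, N2, M⟩ := hinv
  constructor
  · intro r i h1r hrm h1i hin hne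
    have hrI : r ∈ Finset.Icc 1 m := Finset.mem_Icc.mpr ⟨h1r, hrm⟩
    have hiI : i ∈ Finset.Icc 1 n := Finset.mem_Icc.mpr ⟨h1i, hin⟩
    constructor
    · intro s hs
      rcases ha r i h1r hrm h1i hin hne with hc | hc
      · rcases P1 r hrI i hiI hne with hp | hp
        · rw [hp] at hs; exact (Prod.mk.injEq _ _ _ _ ▸ hs).1
        · exfalso
          have := congrArg Prod.fst hp
          simp at this
          omega
      · exfalso
        have h2 := congrArg Prod.snd hs
        simp at h2
        omega
    · intro j hj
      rcases ha r i h1r hrm h1i hin hne with hc | hc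
      · exfalso
        have h2 := congrArg Prod.fst hj
        simp at h2
        omega
      · rcases P1 r hrI i hiI hne with hp | hp
        · exfalso
          have h1 := congrArg Prod.snd hp
          have h2 := congrArg Prod.snd hj
          simp at h1 h2
          omega
        · rw [hp] at hj; exact ((Prod.mk.injEq _ _ _ _ ▸ hj).2).symm ▸ rfl
  · refine ⟨?_, ?_, ?_⟩
    · rintro ⟨p, q, b, j, h1p, hpq, hqm, hqb, hbj, hfp, hfq⟩
      simp only at hfp hfq
      have hpI : p ∈ Finset.Icc 1 m := Finset.mem_Icc.mpr ⟨h1p, by omega⟩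
      have hqI : q ∈ Finset.Icc 1 m := Finset.mem_Icc.mpr ⟨by omega, by omega⟩
      have := N1 p hpI (by omega) q hqI hpq (by omega)
      omega
    · rintro ⟨p, q, b, j, h1p, hpq, hqn, hqb, hbj, hfp, hfq⟩
      simp only at hfp hfq
      have hpI : p ∈ Finset.Icc 1 n := Finset.mem_Icc.mpr ⟨h1p, by omega⟩
      have hqI : q ∈ Finset.Icc 1 n := Finset.mem_Icc.mpr ⟨by omega, by omega⟩
      have := N2 p hpI (by omega) q hqI hpq (by omega)
      omega
    · rintro ⟨r, s, t, i, j, k, h1r, hrs, hst, htm, h1i, hij, hjk, hkn, hne, hHa, hVa⟩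
      have hrI : r ∈ Finset.Icc 1 m := Finset.mem_Icc.mpr ⟨h1r, by omega⟩
      have hsI : s ∈ Finset.Icc 1 m := Finset.mem_Icc.mpr ⟨by omega, by omega⟩
      have hiI : i ∈ Finset.Icc 1 n := Finset.mem_Icc.mpr ⟨h1i, by omega⟩
      have hjI : j ∈ Finset.Icc 1 n := Finset.mem_Icc.mpr ⟨by omega, by omega⟩
      have hsine : ((s : ℕ), i) ≠ (m, n) := by
        intro h
        have := congrArg Prod.snd h
        simp at this
        omega
      have hrjne : ((r : ℕ), j) ≠ (m, n) := by
        intro h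
        have := congrArg Prod.fst h
        simp at this
        omega
      have hgik : (a (m, i)).2 = k := by
        rcases P1 s hsI i hiI hsine with hp | hp
        · rw [hHa] at hp
          have := congrArg Prod.snd hp
          simp at this
          omega
        · rw [hHa] at hp
          have := congrArg Prod.snd hp
          simp at this
          omega
      have hfrt : (a (r, n)).1 = t := by
        rcases P1 r hrI j hjI hrjne with hp | hp
        · rw [hVa] at hp
          have := congrArg Prod.fst hp
          simp at this
          omega
        · rw [hVa] at hp
          have := congrArg Prod.fst hp
          simp at this
          omega
      refine M r hrI (by omega) s hsI i hiI (by omega) j hjI hrs (by omega) hij (by omega)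
        hne ?_ ?_
      · rw [hgik]; exact hHa
      · rw [hfrt]; exact hVa
end
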